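/- If p ≥ 0 and φ ∈ I_o(0,p), then ∫_0^∞ (min(1, x/t))^p φ(t) dt/t ≲ φ(x) for all x > 0, with implicit constant independent of x. -/

import Mathlib

/-!
The function `s_φ` is submultiplicative and `φ(λx) ≤ s_φ(λ) φ(x)`. Iterating `s_φ(c) ≤ 1/2` for one
small `c` upgrades `s_φ(λ) = o(1)` to `s_φ(λ) ≲ λ^ε` on `(0,1]`; the same iteration applied to the
submultiplicative function `μ ↦ μ^p s_φ(1/μ)` gives `s_φ(λ) ≲ λ^(p-ε)` for `λ ≥ 1`. The integrand is
then dominated by `φ(x) (t/x)^ε / t` on `(0,x]` and by `φ(x) (x/t)^ε / t` on `(x,∞)`, and both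
integrate to `φ(x)/ε`.
-/

open Real MeasureTheory Set Filter ENNReal

/-- `s_φ(λ) = sup_{t>0} φ(λt)/φ(t)`, valued in `[0,∞]`. -/
noncomputable def sPhi (φ : ℝ → ℝ) (l : ℝ) : ℝ≥0∞ :=
  ⨆ t ∈ Set.Ioi (0:ℝ), ENNReal.ofReal (φ (l * t) / φ t)

/-- `φ ∈ I(a,b)`: `s_φ(λ) = O(λ^a)` as `λ → 0` and `s_φ(λ) = O(λ^b)` as `λ → ∞`. -/
def memI (φ : ℝ → ℝ) (a b : ℝ) : Prop :=
  (∃ C > (0:ℝ), ∃ δ > (0:ℝ), ∀ l : ℝ, 0 < l → l < δ →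
    sPhi φ l ≤ ENNReal.ofReal (C * l ^ a)) ∧
  (∃ C > (0:ℝ), ∃ M : ℝ, ∀ l : ℝ, M < l →
    sPhi φ l ≤ ENNReal.ofReal (C * l ^ b))

/-- `φ ∈ I_o(a,b)`: `s_φ(λ) = o(λ^a)` as `λ → 0` and `s_φ(λ) = o(λ^b)` as `λ → ∞`. -/
def memIo (φ : ℝ → ℝ) (a b : ℝ) : Prop :=
  (∀ ε > (0:ℝ), ∃ δ > (0:ℝ), ∀ l : ℝ, 0 < l → l < δ →
    sPhi φ l ≤ ENNReal.ofReal (ε * l ^ a)) ∧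
  (∀ ε > (0:ℝ), ∃ M : ℝ, ∀ l : ℝ, M < l →
    sPhi φ l ≤ ENNReal.ofReal (ε * l ^ b))

theorem le_ofReal_rpow_of_submultiplicative {f : ℝ → ℝ≥0∞} {c q K : ℝ}
    (hmul : ∀ a b, 0 < a → 0 < b → f (a * b) ≤ f a * f b)
    (hc₀ : 0 < c) (hc₁ : c < 1) (hq₀ : 0 < q) (hq₁ : q ≤ 1) (hfc : f c ≤ ENNReal.ofReal q)
    (hK₀ : 0 ≤ K) (hK : ∀ l ∈ Ioc c 1, f l ≤ ENNReal.ofReal K) {l : ℝ} (hl : l ∈ Ioc 0 1) :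
    f l ≤ ENNReal.ofReal (K / q * l ^ logb c q) := by
  have hiter : ∀ (n : ℕ) (μ : ℝ), 0 < μ → f (c ^ n * μ) ≤ ENNReal.ofReal q ^ n * f μ := by
    intro n
    induction n with
    | zero => simp
    | succ n ih =>
      intro μ hμ
      calc f (c ^ (n + 1) * μ) = f (c * (c ^ n * μ)) := by ring_nf
        _ ≤ f c * f (c ^ n * μ) := hmul _ _ hc₀ (by positivity)
        _ ≤ ENNReal.ofReal q * (ENNReal.ofReal q ^ n * f μ) := by gcongr; exact ih μ hμ
        _ = ENNReal.ofReal q ^ (n + 1) * f μ := by ring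
  obtain ⟨n, hn, hn'⟩ := exists_nat_pow_near_of_lt_one hl.1 hl.2 hc₀ hc₁
  have hcn : 0 < c ^ n := pow_pos hc₀ n
  -- `c ^ logb c q = q`, so `q ^ (n + 1) = (c ^ (n + 1)) ^ logb c q < l ^ logb c q`
  have hqn : q ^ (n + 1) ≤ l ^ logb c q := by
    calc q ^ (n + 1) = (c ^ (n + 1)) ^ logb c q := by
          rw [← Real.rpow_pow_comm hc₀.le, rpow_logb hc₀ hc₁.ne hq₀]
      _ ≤ l ^ logb c q :=
          rpow_le_rpow (by positivity) hn.le (logb_nonneg_of_base_lt_one hc₀ hc₁ hq₀ hq₁)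
  have hmem : l / c ^ n ∈ Ioc c 1 :=
    ⟨by rw [lt_div_iff₀ hcn, ← pow_succ']; exact hn, (div_le_one hcn).2 hn'⟩
  calc f l = f (c ^ n * (l / c ^ n)) := by rw [mul_div_cancel₀ _ hcn.ne']
    _ ≤ ENNReal.ofReal q ^ n * f (l / c ^ n) := hiter n _ (div_pos hl.1 hcn)
    _ ≤ ENNReal.ofReal q ^ n * ENNReal.ofReal K := by gcongr; exact hK _ hmem
    _ = ENNReal.ofReal (K / q * q ^ (n + 1)) := by
        rw [← ofReal_pow hq₀.le, ← ofReal_mul (by positivity)]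
        congr 1
        field_simp
        ring
    _ ≤ ENNReal.ofReal (K / q * l ^ logb c q) := by gcongr

theorem lintegral_Ioc_zero_rpow {r : ℝ} (hr : -1 < r) {x : ℝ} (hx : 0 ≤ x) :
    ∫⁻ t in Ioc 0 x, ENNReal.ofReal (t ^ r) = ENNReal.ofReal (x ^ (r + 1) / (r + 1)) := by
  rw [← ofReal_integral_eq_lintegral_ofReal
      ((intervalIntegrable_iff_integrableOn_Ioc_of_le hx).1
        (intervalIntegral.intervalIntegrable_rpow' hr))
      ((ae_restrict_mem measurableSet_Ioc).mono fun t ht => rpow_nonneg ht.1.le r),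
    ← intervalIntegral.integral_of_le hx, integral_rpow (Or.inl hr),
    zero_rpow (by linarith), sub_zero]

theorem lintegral_Ioi_rpow {r : ℝ} (hr : r < -1) {x : ℝ} (hx : 0 < x) :
    ∫⁻ t in Ioi x, ENNReal.ofReal (t ^ r) = ENNReal.ofReal (-x ^ (r + 1) / (r + 1)) := by
  rw [← ofReal_integral_eq_lintegral_ofReal (integrableOn_Ioi_rpow_of_lt hr hx)
      ((ae_restrict_mem measurableSet_Ioi).mono fun t ht => rpow_nonneg (hx.trans ht).le r),
    integral_Ioi_rpow_of_lt hr hx]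

section sPhi

variable {φ : ℝ → ℝ} {C ε x : ℝ}

theorem ofReal_div_le_sPhi (l : ℝ) {t : ℝ} (ht : 0 < t) :
    ENNReal.ofReal (φ (l * t) / φ t) ≤ sPhi φ l :=
  le_iSup₂ (f := fun t _ => ENNReal.ofReal (φ (l * t) / φ t)) t ht

theorem le_mul_of_sPhi_le (hφ : ∀ t ∈ Ioi (0:ℝ), 0 < φ t) {l t B : ℝ} (ht : 0 < t) (hB : 0 ≤ B)
    (h : sPhi φ l ≤ ENNReal.ofReal B) : φ (l * t) ≤ B * φ t := by
  have := (ENNReal.ofReal_le_ofReal_iff hB).1 ((ofReal_div_le_sPhi l ht).trans h)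
  rwa [div_le_iff₀ (hφ t ht)] at this

theorem sPhi_mul_le (hφ : ∀ t ∈ Ioi (0:ℝ), 0 < φ t) (a : ℝ) {b : ℝ} (hb : 0 < b) :
    sPhi φ (a * b) ≤ sPhi φ a * sPhi φ b := by
  refine iSup₂_le fun t (ht : 0 < t) => ?_
  have hbt : 0 < b * t := mul_pos hb ht
  calc ENNReal.ofReal (φ (a * b * t) / φ t)
      = ENNReal.ofReal (φ (a * (b * t)) / φ (b * t)) * ENNReal.ofReal (φ (b * t) / φ t) := by
        rw [← ofReal_mul' (div_nonneg (hφ _ hbt).le (hφ t ht).le), mul_assoc,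
          div_mul_div_cancel₀ (hφ _ hbt).ne']
    _ ≤ sPhi φ a * sPhi φ b := mul_le_mul' (ofReal_div_le_sPhi a hbt) (ofReal_div_le_sPhi b ht)

theorem ofReal_rpow_mul_sPhi_inv_mul_le (hφ : ∀ t ∈ Ioi (0:ℝ), 0 < φ t) (p : ℝ) {a b : ℝ}
    (ha : 0 < a) (hb : 0 < b) :
    ENNReal.ofReal ((a * b) ^ p) * sPhi φ (a * b)⁻¹ ≤
      ENNReal.ofReal (a ^ p) * sPhi φ a⁻¹ * (ENNReal.ofReal (b ^ p) * sPhi φ b⁻¹) := by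
  rw [mul_rpow ha.le hb.le, ofReal_mul (by positivity), mul_inv]
  calc ENNReal.ofReal (a ^ p) * ENNReal.ofReal (b ^ p) * sPhi φ (a⁻¹ * b⁻¹)
      ≤ ENNReal.ofReal (a ^ p) * ENNReal.ofReal (b ^ p) * (sPhi φ a⁻¹ * sPhi φ b⁻¹) := by
        gcongr
        exact sPhi_mul_le hφ _ (inv_pos.2 hb)
    _ = _ := by ring

theorem exists_sPhi_le_of_memIo_zero (hφ : ∀ t ∈ Ioi (0:ℝ), 0 < φ t) {p : ℝ}
    (h : memIo φ 0 p) (b : ℝ) : ∃ K > 0, ∀ l ∈ Ioc 0 b, sPhi φ l ≤ ENNReal.ofReal K := by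
  obtain ⟨δ, hδ, hsmall⟩ := h.1 2⁻¹ (by norm_num)
  obtain ⟨M, hlarge⟩ := h.2 2⁻¹ (by norm_num)
  obtain ⟨N, hNM, hNb, hN⟩ : ∃ N, M < N ∧ b / δ < N ∧ 0 < N :=
    ((eventually_gt_atTop M).and ((eventually_gt_atTop _).and (eventually_gt_atTop 0))).exists
  refine ⟨2⁻¹ * (2⁻¹ * N ^ p), by positivity, fun l hl => ?_⟩
  have hlN : l / N < δ := by
    rw [div_lt_iff₀ hN]
    rw [div_lt_iff₀ hδ] at hNb
    linarith [hl.2]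
  calc sPhi φ l = sPhi φ (l / N * N) := by rw [div_mul_cancel₀ _ hN.ne']
    _ ≤ sPhi φ (l / N) * sPhi φ N := sPhi_mul_le hφ _ hN
    _ ≤ ENNReal.ofReal (2⁻¹ * (l / N) ^ (0:ℝ)) * ENNReal.ofReal (2⁻¹ * N ^ p) :=
        mul_le_mul' (hsmall _ (div_pos hl.1 hN) hlN) (hlarge N hNM)
    _ = ENNReal.ofReal (2⁻¹ * (2⁻¹ * N ^ p)) := by
        rw [Real.rpow_zero, mul_one, ← ofReal_mul (by norm_num)]

theorem exists_sPhi_le_rpow_of_memIo_zero (hφ : ∀ t ∈ Ioi (0:ℝ), 0 < φ t) {p : ℝ}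
    (h : memIo φ 0 p) :
    ∃ C > 0, ∃ ε > (0:ℝ), ∀ l ∈ Ioc 0 1, sPhi φ l ≤ ENNReal.ofReal (C * l ^ ε) := by
  obtain ⟨δ, hδ, hsmall⟩ := h.1 2⁻¹ (by norm_num)
  obtain ⟨c, hc₀, hc⟩ := exists_between (lt_min hδ one_pos)
  obtain ⟨K, hK, hKs⟩ := exists_sPhi_le_of_memIo_zero hφ h 1
  have hsc : sPhi φ c ≤ ENNReal.ofReal 2⁻¹ := by
    simpa only [Real.rpow_zero, mul_one] using hsmall c hc₀ (hc.trans_le (min_le_left _ _))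
  have hc₁ : c < 1 := hc.trans_le (min_le_right _ _)
  exact ⟨K / 2⁻¹, by positivity, logb c 2⁻¹, logb_pos_of_base_lt_one hc₀ hc₁ (by norm_num)
    (by norm_num), fun l hl => le_ofReal_rpow_of_submultiplicative
      (fun a _ _ hb => sPhi_mul_le hφ a hb) hc₀ hc₁ (by norm_num) (by norm_num) hsc hK.le
      (fun l hl => hKs l ⟨hc₀.trans hl.1, hl.2⟩) hl⟩

theorem exists_sPhi_le_rpow_sub_of_memIo_zero (hφ : ∀ t ∈ Ioi (0:ℝ), 0 < φ t) {p : ℝ}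
    (hp : 0 ≤ p) (h : memIo φ 0 p) :
    ∃ C > 0, ∃ ε > 0, ∀ l, 1 ≤ l → sPhi φ l ≤ ENNReal.ofReal (C * l ^ (p - ε)) := by
  obtain ⟨M, hlarge⟩ := h.2 2⁻¹ (by norm_num)
  obtain ⟨L, hLM, hL⟩ : ∃ L, M < L ∧ 1 < L :=
    ((eventually_gt_atTop M).and (eventually_gt_atTop 1)).exists
  have hL₀ : 0 < L := one_pos.trans hL
  obtain ⟨K, hK, hKs⟩ := exists_sPhi_le_of_memIo_zero hφ h L
  set g : ℝ → ℝ≥0∞ := fun μ => ENNReal.ofReal (μ ^ p) * sPhi φ μ⁻¹ with hg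
  have hgL : g L⁻¹ ≤ ENNReal.ofReal 2⁻¹ := by
    calc g L⁻¹ ≤ ENNReal.ofReal (L⁻¹ ^ p) * ENNReal.ofReal (2⁻¹ * L ^ p) := by
          simp only [hg, inv_inv]
          gcongr
          exact hlarge L hLM
      _ = ENNReal.ofReal 2⁻¹ := by
          rw [← ofReal_mul (by positivity), inv_rpow hL₀.le]
          field_simp
  have hgK : ∀ μ ∈ Ioc L⁻¹ 1, g μ ≤ ENNReal.ofReal K := fun μ hμ => by
    have hμ₀ : 0 < μ := (inv_pos.2 hL₀).trans hμ.1
    calc g μ ≤ 1 * ENNReal.ofReal K := by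
          simp only [hg]
          gcongr
          · exact ofReal_le_one.2 (rpow_le_one hμ₀.le hμ.2 hp)
          · exact hKs _ ⟨inv_pos.2 hμ₀, (inv_le_comm₀ hμ₀ hL₀).2 hμ.1.le⟩
      _ = ENNReal.ofReal K := one_mul _
  have hL₁ : L⁻¹ < 1 := inv_lt_one_of_one_lt₀ hL
  set ε := logb L⁻¹ 2⁻¹
  refine ⟨K / 2⁻¹, by positivity, ε, logb_pos_of_base_lt_one (by positivity) hL₁ (by norm_num)
    (by norm_num), fun l hl => ?_⟩
  have hl₀ : 0 < l := one_pos.trans_le hl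
  have hgl : g l⁻¹ ≤ ENNReal.ofReal (K / 2⁻¹ * l⁻¹ ^ ε) :=
    le_ofReal_rpow_of_submultiplicative
      (fun a b ha hb => ofReal_rpow_mul_sPhi_inv_mul_le hφ p ha hb) (by positivity) hL₁
      (by norm_num) (by norm_num) hgL hK.le hgK
      ⟨inv_pos.2 hl₀, inv_le_one_of_one_le₀ hl⟩
  calc sPhi φ l = ENNReal.ofReal (l ^ p) * g l⁻¹ := by
        simp only [hg, inv_inv]
        rw [← mul_assoc, ← ofReal_mul (by positivity), inv_rpow hl₀.le,
          mul_inv_cancel₀ (by positivity), ofReal_one, one_mul]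
    _ ≤ ENNReal.ofReal (l ^ p) * ENNReal.ofReal (K / 2⁻¹ * l⁻¹ ^ ε) := by gcongr
    _ = ENNReal.ofReal (K / 2⁻¹ * l ^ (p - ε)) := by
        rw [← ofReal_mul (by positivity), rpow_sub hl₀, inv_rpow hl₀.le]
        ring_nf

theorem setLIntegral_Ioc_min_rpow_le (hφ : ∀ t ∈ Ioi (0:ℝ), 0 < φ t) (hC : 0 < C) (hε : 0 < ε)
    (hs : ∀ l ∈ Ioc 0 1, sPhi φ l ≤ ENNReal.ofReal (C * l ^ ε)) (hx : 0 < x) (p : ℝ) :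
    ∫⁻ t in Ioc 0 x, ENNReal.ofReal ((min 1 (x / t)) ^ p * φ t / t) ≤
      ENNReal.ofReal (C / ε * φ x) := by
  have hφx := hφ x hx
  calc ∫⁻ t in Ioc 0 x, ENNReal.ofReal ((min 1 (x / t)) ^ p * φ t / t)
      ≤ ∫⁻ t in Ioc 0 x, ENNReal.ofReal (C * φ x * x ^ (-ε)) * ENNReal.ofReal (t ^ (ε - 1)) := by
        refine setLIntegral_mono' measurableSet_Ioc fun t ht => ?_
        have ht₀ : 0 < t := ht.1
        have hφt : φ t ≤ C * (t / x) ^ ε * φ x := by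
          simpa only [div_mul_cancel₀ t hx.ne'] using le_mul_of_sPhi_le hφ hx (by positivity)
            (hs (t / x) ⟨div_pos ht₀ hx, (div_le_one hx).2 ht.2⟩)
        rw [← ofReal_mul (by positivity), min_eq_left ((one_le_div ht₀).2 ht.2), Real.one_rpow,
          one_mul]
        gcongr ENNReal.ofReal ?_
        calc φ t / t ≤ C * (t / x) ^ ε * φ x / t := by gcongr
          _ = C * φ x * x ^ (-ε) * t ^ (ε - 1) := by
            rw [div_rpow ht₀.le hx.le, rpow_neg hx.le, rpow_sub_one ht₀.ne']
            field_simp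
    _ = ENNReal.ofReal (C / ε * φ x) := by
        rw [lintegral_const_mul' _ _ ofReal_ne_top, lintegral_Ioc_zero_rpow (by linarith) hx.le,
          sub_add_cancel, ← ofReal_mul (by positivity), rpow_neg hx.le]
        congr 1
        field_simp

theorem setLIntegral_Ioi_min_rpow_le (hφ : ∀ t ∈ Ioi (0:ℝ), 0 < φ t) {p : ℝ} (hC : 0 < C)
    (hε : 0 < ε) (hs : ∀ l, 1 ≤ l → sPhi φ l ≤ ENNReal.ofReal (C * l ^ (p - ε))) (hx : 0 < x) :
    ∫⁻ t in Ioi x, ENNReal.ofReal ((min 1 (x / t)) ^ p * φ t / t) ≤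
      ENNReal.ofReal (C / ε * φ x) := by
  have hφx := hφ x hx
  calc ∫⁻ t in Ioi x, ENNReal.ofReal ((min 1 (x / t)) ^ p * φ t / t)
      ≤ ∫⁻ t in Ioi x, ENNReal.ofReal (C * φ x * x ^ ε) * ENNReal.ofReal (t ^ (-ε - 1)) := by
        refine setLIntegral_mono' measurableSet_Ioi fun t (ht : x < t) => ?_
        have ht₀ : 0 < t := hx.trans ht
        have hφt : φ t ≤ C * (t / x) ^ (p - ε) * φ x := by
          simpa only [div_mul_cancel₀ t hx.ne'] using le_mul_of_sPhi_le hφ hx (by positivity)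
            (hs (t / x) ((one_le_div hx).2 ht.le))
        rw [← ofReal_mul (by positivity), min_eq_right ((div_le_one ht₀).2 ht.le)]
        gcongr ENNReal.ofReal ?_
        calc (x / t) ^ p * φ t / t ≤ (x / t) ^ p * (C * (t / x) ^ (p - ε) * φ x) / t := by gcongr
          _ = C * φ x * x ^ ε * t ^ (-ε - 1) := by
            rw [div_rpow hx.le ht₀.le, div_rpow ht₀.le hx.le, rpow_sub ht₀, rpow_sub hx,
              rpow_sub_one ht₀.ne', rpow_neg ht₀.le]
            field_simp
    _ = ENNReal.ofReal (C / ε * φ x) := by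
        rw [lintegral_const_mul' _ _ ofReal_ne_top, lintegral_Ioi_rpow (by linarith) hx,
          sub_add_cancel, ← ofReal_mul (by positivity), rpow_neg hx.le]
        congr 1
        field_simp

end sPhi

/-- if `p ≥ 0` and `φ ∈ I_o(0,p)`, then
`∫_0^∞ (min(1, x/t))^p φ(t) dt/t ≲ φ(x)` uniformly in `x > 0`. -/
theorem lintegral_min_rpow_le_of_memIo_zero (p : ℝ) (hp : 0 ≤ p)
    (φ : ℝ → ℝ) (hφ : ∀ t ∈ Set.Ioi (0:ℝ), 0 < φ t) (h : memIo φ 0 p) :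
    ∃ C > (0:ℝ), ∀ x > (0:ℝ),
      ∫⁻ t in Set.Ioi (0:ℝ), ENNReal.ofReal ((min 1 (x / t)) ^ p * φ t / t) ≤
        ENNReal.ofReal (C * φ x) := by
  obtain ⟨C₀, hC₀, ε₀, hε₀, h₀⟩ := exists_sPhi_le_rpow_of_memIo_zero hφ h
  obtain ⟨C₁, hC₁, ε₁, hε₁, h₁⟩ := exists_sPhi_le_rpow_sub_of_memIo_zero hφ hp h
  refine ⟨C₀ / ε₀ + C₁ / ε₁, by positivity, fun x hx => ?_⟩
  have hφx := hφ x hx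
  rw [← Ioc_union_Ioi_eq_Ioi hx.le]
  calc _ ≤ _ := lintegral_union_le _ _ _
    _ ≤ ENNReal.ofReal (C₀ / ε₀ * φ x) + ENNReal.ofReal (C₁ / ε₁ * φ x) :=
        add_le_add (setLIntegral_Ioc_min_rpow_le hφ hC₀ hε₀ h₀ hx p)
          (setLIntegral_Ioi_min_rpow_le hφ hC₁ hε₁ h₁ hx)
    _ = ENNReal.ofReal ((C₀ / ε₀ + C₁ / ε₁) * φ x) := by
        rw [← ofReal_add (by positivity) (by positivity), add_mul]
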